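/- arXiv:2211.14659 — 2 statements merged into one kernel-verified Lean document; each statement's English description precedes it below -/
import Mathlib

section
/- Suppose measures μ_out^l, μ_in^l, μ_out^r, μ_in^r on a measurable space X satisfy: (i) μ_out^r = R · μ_in^r and μ_out^l = R · μ_in^l for a measurable function R : X → [0, 1), and (ii) there are measurable bijections Φ_{l→r}, Φ_{r→l} with μ_in^l(B) = μ_out^r(Φ_{l→r}B) and μ_in^r(B) = μ_out^l(Φ_{r→l}B) for all Borel B, and (iii) for every Borel set B there exists k ≥ 0 with μ_in^r((Φ_{l→r} ∘ (Φ_{r→l}∘Φ_{l→r})^{k-1})(B)) = 0 or R = 0 on the orbit. Then on any Borel set B whose forward orbit under Φ := Φ_{r→l}∘Φ_{l→r} leaves X after finitely many steps (i.e. Φ^{k₀}(B) has μ_in^r-image zero), one has μ_out^l(B) = 0. -/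
/-!
Since `R < 1`, each reflection relation makes the outgoing measure a minorant of the incoming
one, so following the beam once around, `μ_out^l(A) ≤ μ_in^l(A) = μ_out^r(Φ_{l→r} A) ≤
μ_in^r(Φ_{l→r} A) = μ_out^l(Φ A)`. Hence `μ_out^l` can only grow along the forward orbit of `B`,
and it is bounded by `μ_in^r(Φ_{l→r}(Φ^[k] B)) = 0` once the orbit has escaped.
-/

open MeasureTheory

namespace MeasureTheory.Measure

variable {X : Type*} [MeasurableSpace X]

theorem le_of_forall_eq_setLIntegral {ν μ : Measure X} {f : X → ENNReal} (hf : ∀ x, f x ≤ 1)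
    (h : ∀ A, MeasurableSet A → ν A = ∫⁻ x in A, f x ∂μ) : ν ≤ μ := by
  refine Measure.le_iff.2 fun A hA => ?_
  calc ν A = ∫⁻ x in A, f x ∂μ := h A hA
    _ ≤ ∫⁻ _ in A, 1 ∂μ := lintegral_mono hf
    _ = μ A := setLIntegral_one A

theorem le_measure_image_iterate {ν : Measure X} {e : X ≃ᵐ X}
    (h : ∀ A, MeasurableSet A → ν A ≤ ν (e '' A)) (n : ℕ) {A : Set X} (hA : MeasurableSet A) :
    ν A ≤ ν (e^[n] '' A) := by
  induction n generalizing A with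
  | zero => simp
  | succ n ih =>
    calc ν A ≤ ν (e '' A) := h A hA
      _ ≤ ν (e^[n] '' (e '' A)) := ih (e.measurableSet_image.2 hA)
      _ = ν (e^[n + 1] '' A) := by rw [Function.iterate_succ, Set.image_comp]

end MeasureTheory.Measure

theorem MeasurableEquiv.measurableSet_image_iterate {X : Type*} [MeasurableSpace X]
    (e : X ≃ᵐ X) (n : ℕ) {A : Set X} (hA : MeasurableSet A) : MeasurableSet (e^[n] '' A) := by
  induction n with
  | zero => simpa using hA
  | succ n ih => rw [Function.iterate_succ', Set.image_comp]; exact e.measurableSet_image.2 ih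

theorem escaping_orbit_has_no_mass_general {X : Type*} [MeasurableSpace X]
    (R : X → ℝ) (hR1 : ∀ x, R x < 1)
    (μoutl μinl μoutr μinr : Measure X)
    (Φlr Φrl : X ≃ᵐ X)
    (hrefl_r : ∀ A : Set X, MeasurableSet A →
      μoutr A = ∫⁻ x in A, ENNReal.ofReal (R x) ∂μinr)
    (hrefl_l : ∀ A : Set X, MeasurableSet A →
      μoutl A = ∫⁻ x in A, ENNReal.ofReal (R x) ∂μinl)
    (htrans_l : ∀ A : Set X, MeasurableSet A → μinl A = μoutr (Φlr '' A))
    (htrans_r : ∀ A : Set X, MeasurableSet A → μinr A = μoutl (Φrl '' A))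
    (B : Set X) (hB : MeasurableSet B)
    (hescape : ∃ k : ℕ, μinr (Φlr '' ((fun x => Φrl (Φlr x))^[k] '' B)) = 0) :
    μoutl B = 0 := by
  obtain ⟨k, hk⟩ := hescape
  have hR : ∀ x, ENNReal.ofReal (R x) ≤ 1 := fun x => ENNReal.ofReal_le_one.2 (hR1 x).le
  have hl : μoutl ≤ μinl := Measure.le_of_forall_eq_setLIntegral hR hrefl_l
  have hr : μoutr ≤ μinr := Measure.le_of_forall_eq_setLIntegral hR hrefl_r
  have half_turn : ∀ A, MeasurableSet A → μoutl A ≤ μinr (Φlr '' A) := fun A hA =>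
    calc μoutl A ≤ μinl A := hl A
      _ = μoutr (Φlr '' A) := htrans_l A hA
      _ ≤ μinr (Φlr '' A) := hr _
  set Φ : X ≃ᵐ X := Φlr.trans Φrl
  have full_turn : ∀ A, MeasurableSet A → μoutl A ≤ μoutl (Φ '' A) := fun A hA => by
    rw [show ⇑Φ = Φrl ∘ Φlr from rfl, Set.image_comp, ← htrans_r _ (Φlr.measurableSet_image.2 hA)]
    exact half_turn A hA
  have hΦk := Φ.measurableSet_image_iterate k hB
  refine nonpos_iff_eq_zero.1 ?_
  calc μoutl B ≤ μoutl (Φ^[k] '' B) := Measure.le_measure_image_iterate full_turn k hB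
    _ ≤ μinr (Φlr '' (Φ^[k] '' B)) := half_turn _ hΦk
    _ = 0 := hk

/-- Abstract bookkeeping for reflected defect measures (the `beam_follow` argument):
suppose `μ_out^{r} = R·μ_in^{r}` and `μ_out^{l} = R·μ_in^{l}` with `0 ≤ R < 1`, and the
transport relations `μ_in^{l}(B) = μ_out^{r}(Φ_{l→r} B)`, `μ_in^{r}(B) = μ_out^{l}(Φ_{r→l} B)`
hold along measurable bijections. If the forward orbit of a Borel set `B` under
`Φ = Φ_{r→l} ∘ Φ_{l→r}` leaves the space after finitely many steps (i.e. some iterate has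
`μ_in^{r}`-image zero), then `μ_out^{l}(B) = 0`. -/
theorem escaping_orbit_has_no_mass {X : Type*} [MeasurableSpace X]
    (R : X → ℝ) (hRmeas : Measurable R) (hR0 : ∀ x, 0 ≤ R x) (hR1 : ∀ x, R x < 1)
    (μoutl μinl μoutr μinr : Measure X)
    (Φlr Φrl : X ≃ᵐ X)
    (hrefl_r : ∀ A : Set X, MeasurableSet A →
      μoutr A = ∫⁻ x in A, ENNReal.ofReal (R x) ∂μinr)
    (hrefl_l : ∀ A : Set X, MeasurableSet A →
      μoutl A = ∫⁻ x in A, ENNReal.ofReal (R x) ∂μinl)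
    (htrans_l : ∀ A : Set X, MeasurableSet A → μinl A = μoutr (Φlr '' A))
    (htrans_r : ∀ A : Set X, MeasurableSet A → μinr A = μoutl (Φrl '' A))
    (B : Set X) (hB : MeasurableSet B)
    (hescape : ∃ k : ℕ, μinr (Φlr '' ((fun x => Φrl (Φlr x))^[k] '' B)) = 0) :
    μoutl B = 0 :=
  escaping_orbit_has_no_mass_general R hR1 μoutl μinl μoutr μinr Φlr Φrl hrefl_r hrefl_l htrans_l
    htrans_r B hB hescape
end

section
/- For any finite set of base points x'₁, …, x'ₙ on a line and any ε > 0, the set of frequency tuples (ξ'₁, …, ξ'ₙ) ∈ B(0,1)ⁿ for which the family of Diracs (δ_{x'_j, ξ'_j}) fails to be non-interacting under the billiard return map Φ(y, ξ') = (y + c·ξ'/√(1−ξ'²), ξ') (c > 0 fixed) — i.e., for which some point equals the image of another under some iterate Φⁿ, n ≥ 0, with distinct indices — is contained in a countable union of sets each defined by an equation x'_{j₁} − x'_{j₂} = n·c·ξ'/√(1−ξ'²) for some n ∈ ℤ; in particular, for each fixed choice of the other coordinates, the set of bad values of a single ξ'_j is countable. -/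
/-! On the frequency component the return map is the identity, and on the position component it
is the translation by `c ξ' / √(1 - ξ'²)`, so `Φⁿ (y, ξ') = (y + n c ξ' / √(1 - ξ'²), ξ')`.
A collision of two Diracs therefore forces `x'_{j₁} - x'_{j₂} = n c ξ' / √(1 - ξ'²)`. Since
`ξ' ↦ ξ' / √(1 - ξ'²) = tan (arcsin ξ')` is injective on `(-1, 1)`, each `n` allows at most one
bad frequency once `x'_{j₁} ≠ x'_{j₂}`, whence countably many in total. -/

open Set Real

theorem iterate_add_snd_apply {M β : Type*} [AddMonoid M] (g : β → M) (n : ℕ) (y : M) (b : β) :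
    (fun p : M × β => (p.1 + g p.2, p.2))^[n] (y, b) = (y + n • g b, b) := by
  induction n with
  | zero => simp
  | succ n ih => rw [Function.iterate_succ_apply', ih, succ_nsmul, add_assoc]

theorem strictMonoOn_div_sqrt_one_sub_sq :
    StrictMonoOn (fun s : ℝ => s / √(1 - s ^ 2)) (Ioo (-1) 1) := by
  have hmaps : MapsTo arcsin (Ioo (-1) 1) (Ioo (-(π / 2)) (π / 2)) := fun s hs =>
    ⟨neg_pi_div_two_lt_arcsin.2 hs.1, arcsin_lt_pi_div_two.2 hs.2⟩
  have hcomp := strictMonoOn_tan.comp (strictMonoOn_arcsin.mono Ioo_subset_Icc_self) hmaps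
  simpa only [Function.comp_def, tan_arcsin] using hcomp

/-- `g` maps the solutions into the countable set `{a / (n c) | n ∈ ℕ}`. -/
theorem countable_setOf_eq_natCast_mul {α : Type*} {S : Set α} {g : α → ℝ} (hg : InjOn g S)
    {a : ℝ} (ha : a ≠ 0) (c : ℝ) :
    {t | t ∈ S ∧ ∃ n : ℕ, a = n * c * g t}.Countable := by
  refine MapsTo.countable_of_injOn (t := range fun n : ℕ => a / (n * c)) ?_
    (hg.mono fun _ ht => ht.1) (countable_range _)
  rintro t ⟨-, n, hn⟩
  have hnc : (n : ℝ) * c ≠ 0 := fun h => ha (by rw [hn, h, zero_mul])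
  exact ⟨n, by rw [hn]; exact mul_div_cancel_left₀ _ hnc⟩

theorem bad_frequencies_countable_general (c : ℝ) (N : ℕ) (x : Fin N → ℝ) :
    ({ξ : Fin N → ℝ | (∀ j, |ξ j| < 1) ∧ ∃ j₁ j₂ : Fin N, j₁ ≠ j₂ ∧ ∃ n : ℕ,
        ((x j₁, ξ j₁) : ℝ × ℝ) =
          (fun p : ℝ × ℝ => (p.1 + c * p.2 / Real.sqrt (1 - p.2 ^ 2), p.2))^[n]
            (x j₂, ξ j₂)}
      ⊆ ⋃ (j₁ : Fin N) (j₂ : Fin N) (n : ℕ),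
          {ξ : Fin N → ℝ |
            x j₁ - x j₂ = (n : ℝ) * c * ξ j₂ / Real.sqrt (1 - (ξ j₂) ^ 2)}) ∧
    (∀ x₁ x₂ : ℝ, x₁ ≠ x₂ →
      Set.Countable {s : ℝ | |s| < 1 ∧
        ∃ n : ℕ, x₁ - x₂ = (n : ℝ) * c * s / Real.sqrt (1 - s ^ 2)}) := by
  constructor
  · rintro ξ ⟨-, j₁, j₂, -, n, hcoll⟩
    rw [iterate_add_snd_apply (fun s => c * s / √(1 - s ^ 2)), Prod.mk.injEq] at hcoll
    refine mem_iUnion₂.2 ⟨j₁, j₂, mem_iUnion.2 ⟨n, ?_⟩⟩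
    rw [mem_ofPred_eq, hcoll.1, nsmul_eq_mul]
    ring
  · intro x₁ x₂ hne
    refine (countable_setOf_eq_natCast_mul strictMonoOn_div_sqrt_one_sub_sq.injOn
      (sub_ne_zero.2 hne) c).mono ?_
    rintro s ⟨hs, n, hn⟩
    exact ⟨abs_lt.1 hs, n, by rw [hn, mul_div_assoc]⟩

/-- Genericity of non-interacting Diracs (behind Lemma 7.3): for the billiard return map
`Φ(y, ξ') = (y + c ξ'/√(1−ξ'²), ξ')` with `c > 0` and base points `x'_1, …, x'_N`, the set
of frequency tuples for which some point equals the image of another (with distinct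
indices) under some iterate `Φⁿ` is contained in the countable union over `(j₁, j₂, n)`
of the sets defined by `x'_{j₁} − x'_{j₂} = n c ξ'_{j₂}/√(1 − ξ'^2_{j₂})`; and for fixed
distinct base points the set of bad values of a single frequency is countable. -/
theorem bad_frequencies_countable (c : ℝ) (hc : 0 < c) (N : ℕ) (x : Fin N → ℝ) :
    ({ξ : Fin N → ℝ | (∀ j, |ξ j| < 1) ∧ ∃ j₁ j₂ : Fin N, j₁ ≠ j₂ ∧ ∃ n : ℕ,
        ((x j₁, ξ j₁) : ℝ × ℝ) =
          (fun p : ℝ × ℝ => (p.1 + c * p.2 / Real.sqrt (1 - p.2 ^ 2), p.2))^[n]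
            (x j₂, ξ j₂)}
      ⊆ ⋃ (j₁ : Fin N) (j₂ : Fin N) (n : ℕ),
          {ξ : Fin N → ℝ |
            x j₁ - x j₂ = (n : ℝ) * c * ξ j₂ / Real.sqrt (1 - (ξ j₂) ^ 2)}) ∧
    (∀ x₁ x₂ : ℝ, x₁ ≠ x₂ →
      Set.Countable {s : ℝ | |s| < 1 ∧
        ∃ n : ℕ, x₁ - x₂ = (n : ℝ) * c * s / Real.sqrt (1 - s ^ 2)}) :=
  bad_frequencies_countable_general c N x
end
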